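/- arXiv:2404.00651 — 3 statements merged into one kernel-verified Lean document; each statement's English description precedes it below -/
import Mathlib

section
/- Let M be a finite discounted MDP whose reward r takes values in [0, R_max], and let P̂ be a transition kernel with TV(P(·|s,a), P̂(·|s,a)) ≤ ε_m for all (s,a). Let W : S → [0, V_max] and H ≥ 1. Then for every start state s and every action sequence τ ∈ A^H, |J_P(s,τ) − J_{P̂}(s,τ)| ≤ R_max Σ_{t=0}^{H−1} γ^t t ε_m + γ^H H ε_m V_max, where J_P and J_{P̂} are the H-step values with terminal function W under the kernels P and P̂ respectively. -/
/-!
Peel off the first step. The two values share the reward `r s a₀`, so their difference is `γ`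
times `E_P[J_P] - E_{P̂}[J_{P̂}] = (E_P - E_{P̂})[J_P] + E_{P̂}[J_P - J_{P̂}]`. Since `J_P` takes
values in an interval of length `Rmax ∑_{t<n} γ^t + γ^n Vmax`, the first term is at most `εm`
times that length (centre `J_P` at the midpoint: `P - P̂` has total mass zero), and the second
is at most the error bound at the shorter horizon. Unrolling this recursion gives the bound.
-/

/-- The `H`-step value `J_Q(s, τ)` of executing the action sequence `τ` from `s`
under the kernel `Q`, collecting discounted rewards `r` and the terminal value
`W` at the final state: `J_Q(s,τ) = E[∑_{t<H} γ^t r(s_t,a_t) + γ^H W(s_H)]`. -/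
noncomputable def Jval {S A : Type*} [Fintype S] (γ : ℝ) (r : S → A → ℝ)
    (Q : S → A → S → ℝ) (W : S → ℝ) : (H : ℕ) → S → (Fin H → A) → ℝ
  | 0, s, _ => W s
  | H + 1, s, τ =>
      r s (τ 0) + γ * ∑ s', Q s (τ 0) s' * Jval γ r Q W H s' (fun i => τ i.succ)

open Finset

section TotalVariation

variable {ι : Type*} [Fintype ι] {p q f g : ι → ℝ} {ε M B : ℝ}

theorem abs_sum_sub_mul_le (hpq : ∑ i, p i = ∑ i, q i) (hf : ∀ i, 0 ≤ f i ∧ f i ≤ M) :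
    |∑ i, (p i - q i) * f i| ≤ (∑ i, |p i - q i|) / 2 * M := by
  have hcentre : ∑ i, (p i - q i) * f i = ∑ i, (p i - q i) * (f i - M / 2) := by
    simp only [mul_sub, sum_sub_distrib, ← sum_mul, hpq, sub_self, zero_mul, sub_zero]
  rw [hcentre, sum_div, sum_mul]
  refine (abs_sum_le_sum_abs _ _).trans (sum_le_sum fun i _ => ?_)
  have hfi : |f i - M / 2| ≤ M / 2 := abs_le.2 ⟨by linarith [hf i], by linarith [hf i]⟩
  rw [abs_mul, div_mul_eq_mul_div, mul_div_assoc]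
  exact mul_le_mul_of_nonneg_left hfi (abs_nonneg _)

theorem abs_sum_mul_sub_sum_mul_le (hpq : ∑ i, p i = ∑ i, q i) (hq0 : ∀ i, 0 ≤ q i)
    (hq1 : ∑ i, q i = 1) (hTV : 1 / 2 * ∑ i, |p i - q i| ≤ ε)
    (hf : ∀ i, 0 ≤ f i ∧ f i ≤ M) (hM : 0 ≤ M) (hfg : ∀ i, |f i - g i| ≤ B) :
    |∑ i, p i * f i - ∑ i, q i * g i| ≤ ε * M + B := by
  have hsplit : ∑ i, p i * f i - ∑ i, q i * g i =
      ∑ i, (p i - q i) * f i + ∑ i, q i * (f i - g i) := by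
    simp only [sub_mul, mul_sub, sum_sub_distrib]
    ring
  have hmix : |∑ i, q i * (f i - g i)| ≤ B :=
    calc |∑ i, q i * (f i - g i)|
        ≤ ∑ i, q i * |f i - g i| := by
          refine (abs_sum_le_sum_abs _ _).trans_eq (sum_congr rfl fun i _ => ?_)
          rw [abs_mul, abs_of_nonneg (hq0 i)]
      _ ≤ ∑ i, q i * B := sum_le_sum fun i _ => mul_le_mul_of_nonneg_left (hfg i) (hq0 i)
      _ = B := by rw [← sum_mul, hq1, one_mul]
  have hshift : |∑ i, (p i - q i) * f i| ≤ ε * M :=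
    (abs_sum_sub_mul_le hpq hf).trans
      (mul_le_mul_of_nonneg_right (by linarith) hM)
  rw [hsplit]
  exact (abs_add_le _ _).trans (add_le_add hshift hmix)

end TotalVariation

section Horizon

variable {γ Rmax Vmax εm : ℝ}

noncomputable def valueBound (γ Rmax Vmax : ℝ) (n : ℕ) : ℝ :=
  Rmax * ∑ t ∈ range n, γ ^ t + γ ^ n * Vmax

noncomputable def modelErrorBound (γ Rmax Vmax εm : ℝ) (n : ℕ) : ℝ :=
  Rmax * ∑ t ∈ range n, γ ^ t * (t : ℝ) * εm + γ ^ n * (n : ℝ) * εm * Vmax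

theorem valueBound_succ (n : ℕ) :
    valueBound γ Rmax Vmax (n + 1) = Rmax + γ * valueBound γ Rmax Vmax n := by
  simp only [valueBound, sum_range_succ', pow_succ', ← mul_sum, pow_zero]
  ring

theorem modelErrorBound_succ (n : ℕ) :
    modelErrorBound γ Rmax Vmax εm (n + 1) =
      γ * (εm * valueBound γ Rmax Vmax n + modelErrorBound γ Rmax Vmax εm n) := by
  have hterm (t : ℕ) : γ ^ (t + 1) * ((t + 1 : ℕ) : ℝ) * εm =
      γ * (εm * γ ^ t) + γ * (γ ^ t * (t : ℝ) * εm) := by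
    push_cast
    ring
  simp only [modelErrorBound, valueBound, sum_range_succ', hterm, sum_add_distrib, ← mul_sum]
  push_cast
  ring

end Horizon

section Jval

variable {S A : Type*} [Fintype S] {γ Rmax Vmax : ℝ} {r : S → A → ℝ} {Q : S → A → S → ℝ}
  {W : S → ℝ}

theorem Jval_zero (s : S) (τ : Fin 0 → A) : Jval γ r Q W 0 s τ = W s := rfl

theorem Jval_succ (n : ℕ) (s : S) (τ : Fin (n + 1) → A) :
    Jval γ r Q W (n + 1) s τ =
      r s (τ 0) + γ * ∑ s', Q s (τ 0) s' * Jval γ r Q W n s' (Fin.tail τ) := rfl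

theorem Jval_nonneg (hγ : 0 ≤ γ) (hQ0 : ∀ s a s', 0 ≤ Q s a s') (hr : ∀ s a, 0 ≤ r s a)
    (hW : ∀ s, 0 ≤ W s) (n : ℕ) (s : S) (τ : Fin n → A) : 0 ≤ Jval γ r Q W n s τ := by
  induction n generalizing s with
  | zero => exact hW s
  | succ n ih =>
    exact add_nonneg (hr s (τ 0)) <| mul_nonneg hγ <|
      sum_nonneg fun s' _ => mul_nonneg (hQ0 s (τ 0) s') (ih s' (Fin.tail τ))

theorem Jval_le_valueBound (hγ : 0 ≤ γ) (hQ0 : ∀ s a s', 0 ≤ Q s a s')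
    (hQ1 : ∀ s a, ∑ s', Q s a s' = 1) (hr : ∀ s a, r s a ≤ Rmax) (hW : ∀ s, W s ≤ Vmax)
    (n : ℕ) (s : S) (τ : Fin n → A) : Jval γ r Q W n s τ ≤ valueBound γ Rmax Vmax n := by
  induction n generalizing s with
  | zero => simpa [Jval_zero, valueBound] using hW s
  | succ n ih =>
    have hnext :
        ∑ s', Q s (τ 0) s' * Jval γ r Q W n s' (Fin.tail τ) ≤ valueBound γ Rmax Vmax n :=
      calc ∑ s', Q s (τ 0) s' * Jval γ r Q W n s' (Fin.tail τ)
          ≤ ∑ s', Q s (τ 0) s' * valueBound γ Rmax Vmax n :=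
            sum_le_sum fun s' _ => mul_le_mul_of_nonneg_left (ih s' _) (hQ0 _ _ _)
        _ = valueBound γ Rmax Vmax n := by rw [← sum_mul, hQ1, one_mul]
    rw [Jval_succ, valueBound_succ]
    exact add_le_add (hr s (τ 0)) (mul_le_mul_of_nonneg_left hnext hγ)

end Jval

theorem hstep_value_model_error_bound_general
    {S A : Type*} [Fintype S]
    (P Phat : S → A → S → ℝ)
    (hP0 : ∀ s a s', 0 ≤ P s a s') (hP1 : ∀ s a, ∑ s', P s a s' = 1)
    (hQ0 : ∀ s a s', 0 ≤ Phat s a s') (hQ1 : ∀ s a, ∑ s', Phat s a s' = 1)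
    (γ : ℝ) (hγ0 : 0 ≤ γ)
    (r : S → A → ℝ) (Rmax : ℝ) (hr : ∀ s a, 0 ≤ r s a ∧ r s a ≤ Rmax)
    (εm : ℝ) (hTV : ∀ s a, (1 / 2) * ∑ s', |P s a s' - Phat s a s'| ≤ εm)
    (W : S → ℝ) (Vmax : ℝ) (hW : ∀ s, 0 ≤ W s ∧ W s ≤ Vmax)
    (H : ℕ) :
    ∀ (s : S) (τ : Fin H → A),
      |Jval γ r P W H s τ - Jval γ r Phat W H s τ| ≤
        Rmax * ∑ t ∈ Finset.range H, γ ^ t * (t : ℝ) * εm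
          + γ ^ H * (H : ℝ) * εm * Vmax := by
  have hJP (n : ℕ) (s : S) (τ : Fin n → A) :
      0 ≤ Jval γ r P W n s τ ∧ Jval γ r P W n s τ ≤ valueBound γ Rmax Vmax n :=
    ⟨Jval_nonneg hγ0 hP0 (fun s a => (hr s a).1) (fun s => (hW s).1) n s τ,
      Jval_le_valueBound hγ0 hP0 hP1 (fun s a => (hr s a).2) (fun s => (hW s).2) n s τ⟩
  change ∀ s τ, _ ≤ modelErrorBound γ Rmax Vmax εm H
  induction H with
  | zero => simp [Jval_zero, modelErrorBound]
  | succ n ih =>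
    intro s τ
    rw [Jval_succ, Jval_succ, add_sub_add_left_eq_sub, ← mul_sub, abs_mul, abs_of_nonneg hγ0,
      modelErrorBound_succ]
    refine mul_le_mul_of_nonneg_left ?_ hγ0
    exact abs_sum_mul_sub_sum_mul_le ((hP1 s _).trans (hQ1 s _).symm) (hQ0 s _) (hQ1 s _)
      (hTV s _) (fun s' => hJP n s' _) ((hJP n s (Fin.tail τ)).1.trans (hJP n s _).2)
      (fun s' => ih s' _)

/-- If the reward `r` takes values in `[0, Rmax]`, the kernels `P`
and `Phat` satisfy `TV(P(·|s,a), Phat(·|s,a)) ≤ εm` everywhere, and abstractly the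
terminal function `W` takes values in `[0, Vmax]`, then for every start state `s` and
every `H`-step action sequence `τ` (with `H ≥ 1`),
`|J_P(s,τ) - J_{Phat}(s,τ)| ≤ Rmax ∑_{t<H} γ^t t εm + γ^H H εm Vmax`. -/
theorem hstep_value_model_error_bound
    {S A : Type*} [Fintype S] [Fintype A] [Nonempty S] [Nonempty A]
    (P Phat : S → A → S → ℝ)
    (hP0 : ∀ s a s', 0 ≤ P s a s') (hP1 : ∀ s a, ∑ s', P s a s' = 1)
    (hQ0 : ∀ s a s', 0 ≤ Phat s a s') (hQ1 : ∀ s a, ∑ s', Phat s a s' = 1)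
    (γ : ℝ) (hγ0 : 0 ≤ γ) (hγ1 : γ < 1)
    (r : S → A → ℝ) (Rmax : ℝ) (hr : ∀ s a, 0 ≤ r s a ∧ r s a ≤ Rmax)
    (εm : ℝ) (hTV : ∀ s a, (1 / 2) * ∑ s', |P s a s' - Phat s a s'| ≤ εm)
    (W : S → ℝ) (Vmax : ℝ) (hW : ∀ s, 0 ≤ W s ∧ W s ≤ Vmax)
    (H : ℕ) (hH : 1 ≤ H) :
    ∀ (s : S) (τ : Fin H → A),
      |Jval γ r P W H s τ - Jval γ r Phat W H s τ| ≤
        Rmax * ∑ t ∈ Finset.range H, γ ^ t * (t : ℝ) * εm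
          + γ ^ H * (H : ℝ) * εm * Vmax :=
  hstep_value_model_error_bound_general P Phat hP0 hP1 hQ0 hQ1 γ hγ0 r Rmax hr εm hTV W Vmax hW H
end

section
/- Let S and A be finite nonempty sets and let P and P̂ be transition kernels on S×A with TV(P(·|s,a), P̂(·|s,a)) ≤ ε_m for all (s,a). Fix a start state s_0 ∈ S and an action sequence (a_0,…,a_{t−1}) ∈ A^t. Let μ_t and μ̂_t be the probability mass functions of the state s_t obtained by executing these actions from s_0 under P and under P̂ respectively. Then TV(μ_t, μ̂_t) ≤ t ε_m. -/
/-!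
Writing `μ_{t+1} - μ̂_{t+1} = (μ_t - μ̂_t) P + μ̂_t (P - P̂)`, the first term has ℓ¹-norm at most
`‖μ_t - μ̂_t‖₁` because a stochastic matrix does not increase the ℓ¹-norm, and the second at most
`2 εm` because `μ̂_t` is a probability vector. So the ℓ¹-distance grows by at most `2 εm` per step.
-/

/-- The distribution `μ_t` of the state reached after executing the actions
`τ 0, …, τ (t-1)` from the start state `s0` under the transition kernel `Q`:
`μ_0 = δ_{s0}` and `μ_{k+1}(s') = ∑_s μ_k(s) Q(s'|s, τ k)`. -/
noncomputable def trajDist {S A : Type*} [Fintype S] [DecidableEq S]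
    (Q : S → A → S → ℝ) : (t : ℕ) → S → (Fin t → A) → S → ℝ
  | 0, s0, _, s' => if s' = s0 then 1 else 0
  | t + 1, s0, τ, s' =>
      ∑ s, trajDist Q t s0 (fun i => τ i.castSucc) s * Q s (τ (Fin.last t)) s'

open Finset

section Kernel

variable {S T : Type*} [Fintype S] [Fintype T]

theorem sum_abs_sum_mul_le (f : S → ℝ) (K : S → T → ℝ) :
    ∑ t, |∑ s, f s * K s t| ≤ ∑ s, |f s| * ∑ t, |K s t| :=
  calc ∑ t, |∑ s, f s * K s t|
      ≤ ∑ t, ∑ s, |f s| * |K s t| :=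
        sum_le_sum fun t _ => (abs_sum_le_sum_abs _ _).trans_eq (by simp only [abs_mul])
    _ = ∑ s, |f s| * ∑ t, |K s t| := by
        rw [sum_comm]
        simp only [mul_sum]

theorem sum_abs_sum_mul_sub_sum_mul_le {μ ν : S → ℝ} {K L : S → T → ℝ} {δ : ℝ}
    (hK0 : ∀ s t, 0 ≤ K s t) (hK1 : ∀ s, ∑ t, K s t = 1)
    (hν0 : ∀ s, 0 ≤ ν s) (hν1 : ∑ s, ν s = 1) (hKL : ∀ s, ∑ t, |K s t - L s t| ≤ δ) :
    ∑ t, |∑ s, μ s * K s t - ∑ s, ν s * L s t| ≤ ∑ s, |μ s - ν s| + δ := by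
  have hsplit : ∀ t, ∑ s, μ s * K s t - ∑ s, ν s * L s t
      = ∑ s, (μ s - ν s) * K s t + ∑ s, ν s * (K s t - L s t) := fun t => by
    rw [← sum_sub_distrib, ← sum_add_distrib]
    exact sum_congr rfl fun s _ => by ring
  have hcontract : ∑ t, |∑ s, (μ s - ν s) * K s t| ≤ ∑ s, |μ s - ν s| := by
    refine (sum_abs_sum_mul_le _ K).trans_eq (sum_congr rfl fun s _ => ?_)
    simp only [abs_of_nonneg (hK0 s _), hK1, mul_one]
  have hperturb : ∑ t, |∑ s, ν s * (K s t - L s t)| ≤ δ :=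
    calc ∑ t, |∑ s, ν s * (K s t - L s t)|
        ≤ ∑ s, |ν s| * ∑ t, |K s t - L s t| := sum_abs_sum_mul_le ν _
      _ ≤ ∑ s, ν s * δ :=
          sum_le_sum fun s _ => by
            rw [abs_of_nonneg (hν0 s)]
            exact mul_le_mul_of_nonneg_left (hKL s) (hν0 s)
      _ = δ := by rw [← sum_mul, hν1, one_mul]
  calc ∑ t, |∑ s, μ s * K s t - ∑ s, ν s * L s t|
      ≤ ∑ t, (|∑ s, (μ s - ν s) * K s t| + |∑ s, ν s * (K s t - L s t)|) :=
        sum_le_sum fun t _ => (hsplit t).symm ▸ abs_add_le _ _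
    _ ≤ ∑ s, |μ s - ν s| + δ := by
        rw [sum_add_distrib]
        exact add_le_add hcontract hperturb

end Kernel

section trajDist

variable {S A : Type*} [Fintype S] [DecidableEq S]

theorem trajDist_nonneg {Q : S → A → S → ℝ} (hQ0 : ∀ s a s', 0 ≤ Q s a s') :
    ∀ (t : ℕ) (s0 : S) (τ : Fin t → A) (s' : S), 0 ≤ trajDist Q t s0 τ s'
  | 0, s0, _, s' => by
      simp only [trajDist]
      split_ifs <;> norm_num
  | t + 1, s0, τ, s' =>
      sum_nonneg fun s _ => mul_nonneg (trajDist_nonneg hQ0 t s0 _ s) (hQ0 _ _ _)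

theorem sum_trajDist {Q : S → A → S → ℝ} (hQ1 : ∀ s a, ∑ s', Q s a s' = 1) :
    ∀ (t : ℕ) (s0 : S) (τ : Fin t → A), ∑ s', trajDist Q t s0 τ s' = 1
  | 0, s0, _ => by simp [trajDist]
  | t + 1, s0, τ => by
      simp only [trajDist]
      rw [sum_comm]
      simp only [← mul_sum, hQ1, mul_one]
      exact sum_trajDist hQ1 t s0 _

theorem sum_abs_trajDist_sub_le {P Phat : S → A → S → ℝ}
    (hP0 : ∀ s a s', 0 ≤ P s a s') (hP1 : ∀ s a, ∑ s', P s a s' = 1)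
    (hQ0 : ∀ s a s', 0 ≤ Phat s a s') (hQ1 : ∀ s a, ∑ s', Phat s a s' = 1)
    {δ : ℝ} (hPQ : ∀ s a, ∑ s', |P s a s' - Phat s a s'| ≤ δ) :
    ∀ (t : ℕ) (s0 : S) (τ : Fin t → A),
      ∑ s', |trajDist P t s0 τ s' - trajDist Phat t s0 τ s'| ≤ t * δ
  | 0, s0, _ => by simp [trajDist]
  | t + 1, s0, τ =>
      calc ∑ s', |trajDist P (t + 1) s0 τ s' - trajDist Phat (t + 1) s0 τ s'|
          ≤ ∑ s, |trajDist P t s0 _ s - trajDist Phat t s0 _ s| + δ :=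
            sum_abs_sum_mul_sub_sum_mul_le (hP0 · _) (hP1 · _) (trajDist_nonneg hQ0 t s0 _)
              (sum_trajDist hQ1 t s0 _) (hPQ · _)
        _ ≤ t * δ + δ := by grw [sum_abs_trajDist_sub_le hP0 hP1 hQ0 hQ1 hPQ t s0]
        _ = (t + 1 : ℕ) * δ := by push_cast; ring

end trajDist

theorem state_distribution_tv_bound_general
    {S A : Type*} [Fintype S] [DecidableEq S]
    (P Phat : S → A → S → ℝ)
    (hP0 : ∀ s a s', 0 ≤ P s a s') (hP1 : ∀ s a, ∑ s', P s a s' = 1)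
    (hQ0 : ∀ s a s', 0 ≤ Phat s a s') (hQ1 : ∀ s a, ∑ s', Phat s a s' = 1)
    (εm : ℝ) (hTV : ∀ s a, (1 / 2) * ∑ s', |P s a s' - Phat s a s'| ≤ εm)
    (t : ℕ) (s0 : S) (τ : Fin t → A) :
    (1 / 2) * ∑ s', |trajDist P t s0 τ s' - trajDist Phat t s0 τ s'|
      ≤ (t : ℝ) * εm := by
  have hL1 := sum_abs_trajDist_sub_le hP0 hP1 hQ0 hQ1 (δ := 2 * εm)
    (fun s a => by linarith [hTV s a]) t s0 τ
  linarith

/-- If two transition kernels `P` and `Phat` satisfy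
`TV(P(·|s,a), Phat(·|s,a)) ≤ εm` for all `(s,a)`, then for any start state `s0`
and action sequence `τ ∈ A^t`, the state distributions `μ_t` and `μ̂_t` obtained
by executing these actions under `P` and `Phat` satisfy `TV(μ_t, μ̂_t) ≤ t εm`. -/
theorem state_distribution_tv_bound
    {S A : Type*} [Fintype S] [DecidableEq S] [Fintype A] [Nonempty S] [Nonempty A]
    (P Phat : S → A → S → ℝ)
    (hP0 : ∀ s a s', 0 ≤ P s a s') (hP1 : ∀ s a, ∑ s', P s a s' = 1)
    (hQ0 : ∀ s a s', 0 ≤ Phat s a s') (hQ1 : ∀ s a, ∑ s', Phat s a s' = 1)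
    (εm : ℝ) (hTV : ∀ s a, (1 / 2) * ∑ s', |P s a s' - Phat s a s'| ≤ εm)
    (t : ℕ) (s0 : S) (τ : Fin t → A) :
    (1 / 2) * ∑ s', |trajDist P t s0 τ s' - trajDist Phat t s0 τ s'|
      ≤ (t : ℝ) * εm :=
  state_distribution_tv_bound_general P Phat hP0 hP1 hQ0 hQ1 εm hTV t s0 τ
end

section
/- Let M be a finite discounted MDP whose reward r takes values in [0, R_max], let P̂ be a transition kernel with TV(P(·|s,a), P̂(·|s,a)) ≤ ε_m for all (s,a), let W : S → [0, V_max], and fix H ≥ 1. For each state s, let σ*(s) ∈ argmax_{τ∈A^H} J_P(s,τ) and let σ̂(s) ∈ A^H satisfy max_{τ∈A^H} J_{P̂}(s,τ) − J_{P̂}(s,σ̂(s)) ≤ ε_p, where J_P and J_{P̂} are the H-step values with terminal function W. Then for every state s, J_P(s, σ*(s)) − J_P(s, σ̂(s)) ≤ 2 ( R_max Σ_{t=0}^{H−1} γ^t t ε_m + γ^H H ε_m V_max ) + ε_p. -/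
section WeightedSums

variable {ι : Type*} [Fintype ι]

theorem sum_mul_le_of_forall_le {p f : ι → ℝ} {b : ℝ} (hp0 : ∀ i, 0 ≤ p i)
    (hp1 : ∑ i, p i = 1) (hf : ∀ i, f i ≤ b) : ∑ i, p i * f i ≤ b :=
  calc ∑ i, p i * f i ≤ ∑ i, p i * b :=
        Finset.sum_le_sum fun i _ => mul_le_mul_of_nonneg_left (hf i) (hp0 i)
    _ = b := by rw [← Finset.sum_mul, hp1, one_mul]

theorem abs_sum_mul_le_of_forall_abs_le {p f : ι → ℝ} {b : ℝ} (hp0 : ∀ i, 0 ≤ p i)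
    (hp1 : ∑ i, p i = 1) (hf : ∀ i, |f i| ≤ b) : |∑ i, p i * f i| ≤ b :=
  calc |∑ i, p i * f i| ≤ ∑ i, p i * |f i| := by
        simpa only [abs_mul, abs_of_nonneg (hp0 _)] using
          Finset.abs_sum_le_sum_abs (fun i => p i * f i) Finset.univ
    _ ≤ b := sum_mul_le_of_forall_le hp0 hp1 hf

theorem abs_sum_mul_sub_sum_mul_le_s9 {p q f : ι → ℝ} {a b : ℝ} (hpq : ∑ i, p i = ∑ i, q i)
    (hf : ∀ i, f i ∈ Set.Icc a b) :
    |∑ i, p i * f i - ∑ i, q i * f i| ≤ (1 / 2 * ∑ i, |p i - q i|) * (b - a) := by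
  -- centring `f` at the midpoint costs nothing because `p` and `q` have the same mass
  have hcentre : ∑ i, p i * f i - ∑ i, q i * f i
      = ∑ i, (p i - q i) * (f i - (a + b) / 2) := by
    simp only [sub_mul, mul_sub, Finset.sum_sub_distrib, ← Finset.sum_mul, hpq]
    ring
  have hdev : ∀ i, |f i - (a + b) / 2| ≤ (b - a) / 2 := fun i =>
    abs_le.mpr ⟨by linarith [(hf i).1], by linarith [(hf i).2]⟩
  calc |∑ i, p i * f i - ∑ i, q i * f i|
      ≤ ∑ i, |p i - q i| * |f i - (a + b) / 2| := by
        rw [hcentre]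
        simpa only [abs_mul] using
          Finset.abs_sum_le_sum_abs (fun i => (p i - q i) * (f i - (a + b) / 2)) Finset.univ
    _ ≤ ∑ i, |p i - q i| * ((b - a) / 2) :=
        Finset.sum_le_sum fun i _ => mul_le_mul_of_nonneg_left (hdev i) (abs_nonneg _)
    _ = (1 / 2 * ∑ i, |p i - q i|) * (b - a) := by rw [← Finset.sum_mul]; ring

end WeightedSums

theorem sum_range_succ_pow_mul_cast (γ : ℝ) (H : ℕ) :
    ∑ t ∈ Finset.range (H + 1), γ ^ t * (t : ℝ)
      = γ * (∑ t ∈ Finset.range H, γ ^ t * (t : ℝ) + ∑ t ∈ Finset.range H, γ ^ t) := by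
  rw [Finset.sum_range_succ', mul_add, Finset.mul_sum, Finset.mul_sum, ← Finset.sum_add_distrib]
  simp only [Nat.cast_add, Nat.cast_one, Nat.cast_zero, mul_zero, add_zero]
  exact Finset.sum_congr rfl fun t _ => by ring

namespace Jval

variable {S A : Type*} [Fintype S] {γ : ℝ} {r : S → A → ℝ} {Q : S → A → S → ℝ} {W : S → ℝ}

theorem succ (H : ℕ) (s : S) (τ : Fin (H + 1) → A) :
    Jval γ r Q W (H + 1) s τ
      = r s (τ 0) + γ * ∑ s', Q s (τ 0) s' * Jval γ r Q W H s' (Fin.tail τ) :=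
  rfl

theorem nonneg (hQ0 : ∀ s a s', 0 ≤ Q s a s') (hγ0 : 0 ≤ γ) (hr : ∀ s a, 0 ≤ r s a)
    (hW : ∀ s, 0 ≤ W s) : ∀ (H : ℕ) (s : S) (τ : Fin H → A), 0 ≤ Jval γ r Q W H s τ
  | 0, s, _ => hW s
  | H + 1, s, τ => by
    rw [succ]
    have hexp := Finset.sum_nonneg fun s' (_ : s' ∈ Finset.univ) =>
      mul_nonneg (hQ0 s (τ 0) s') (nonneg hQ0 hγ0 hr hW H s' (Fin.tail τ))
    have := hr s (τ 0)
    positivity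

theorem le {Rmax Vmax : ℝ} (hQ0 : ∀ s a s', 0 ≤ Q s a s') (hQ1 : ∀ s a, ∑ s', Q s a s' = 1)
    (hγ0 : 0 ≤ γ) (hr : ∀ s a, r s a ≤ Rmax) (hW : ∀ s, W s ≤ Vmax) :
    ∀ (H : ℕ) (s : S) (τ : Fin H → A),
      Jval γ r Q W H s τ ≤ Rmax * ∑ t ∈ Finset.range H, γ ^ t + γ ^ H * Vmax
  | 0, s, _ => by simpa [Jval] using hW s
  | H + 1, s, τ => by
    have hexp := sum_mul_le_of_forall_le (hQ0 s (τ 0)) (hQ1 s (τ 0))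
      fun s' => le hQ0 hQ1 hγ0 hr hW H s' (Fin.tail τ)
    calc Jval γ r Q W (H + 1) s τ
        ≤ Rmax + γ * (Rmax * ∑ t ∈ Finset.range H, γ ^ t + γ ^ H * Vmax) := by
          rw [succ]; gcongr; exact hr s (τ 0)
      _ = Rmax * ∑ t ∈ Finset.range (H + 1), γ ^ t + γ ^ (H + 1) * Vmax := by
          rw [geom_sum_succ, pow_succ]
          ring

theorem abs_sub_le {P Q : S → A → S → ℝ} {Rmax Vmax εm : ℝ}
    (hP0 : ∀ s a s', 0 ≤ P s a s') (hP1 : ∀ s a, ∑ s', P s a s' = 1)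
    (hQ0 : ∀ s a s', 0 ≤ Q s a s') (hQ1 : ∀ s a, ∑ s', Q s a s' = 1) (hγ0 : 0 ≤ γ)
    (hr : ∀ s a, r s a ∈ Set.Icc 0 Rmax) (hW : ∀ s, W s ∈ Set.Icc 0 Vmax)
    (hTV : ∀ s a, 1 / 2 * ∑ s', |P s a s' - Q s a s'| ≤ εm) :
    ∀ (H : ℕ) (s : S) (τ : Fin H → A),
      |Jval γ r P W H s τ - Jval γ r Q W H s τ|
        ≤ Rmax * ∑ t ∈ Finset.range H, γ ^ t * (t : ℝ) * εm + γ ^ H * (H : ℝ) * εm * Vmax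
  | 0, s, _ => by simp [Jval]
  | H + 1, s, τ => by
    set a := τ 0
    set X := fun s' => Jval γ r P W H s' (Fin.tail τ)
    set Y := fun s' => Jval γ r Q W H s' (Fin.tail τ)
    set B := Rmax * ∑ t ∈ Finset.range H, γ ^ t + γ ^ H * Vmax
    have hY : ∀ s', Y s' ∈ Set.Icc 0 B := fun s' =>
      ⟨nonneg hQ0 hγ0 (fun s a => (hr s a).1) (fun s => (hW s).1) H s' _,
        le hQ0 hQ1 hγ0 (fun s a => (hr s a).2) (fun s => (hW s).2) H s' _⟩
    have hB : 0 ≤ B := (hY s).1.trans (hY s).2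
    have hsplit : Jval γ r P W (H + 1) s τ - Jval γ r Q W (H + 1) s τ
        = γ * (∑ s', P s a s' * (X s' - Y s')
          + (∑ s', P s a s' * Y s' - ∑ s', Q s a s' * Y s')) := by
      simp only [succ, mul_sub, Finset.sum_sub_distrib]
      ring
    have hinduct : |∑ s', P s a s' * (X s' - Y s')|
        ≤ Rmax * ∑ t ∈ Finset.range H, γ ^ t * (t : ℝ) * εm + γ ^ H * (H : ℝ) * εm * Vmax :=
      abs_sum_mul_le_of_forall_abs_le (hP0 s a) (hP1 s a)
        fun s' => abs_sub_le hP0 hP1 hQ0 hQ1 hγ0 hr hW hTV H s' _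
    have hmodel : |∑ s', P s a s' * Y s' - ∑ s', Q s a s' * Y s'| ≤ εm * B :=
      calc _ ≤ (1 / 2 * ∑ s', |P s a s' - Q s a s'|) * (B - 0) :=
            abs_sum_mul_sub_sum_mul_le_s9 (by rw [hP1, hQ1]) hY
        _ ≤ εm * B := by rw [sub_zero]; exact mul_le_mul_of_nonneg_right (hTV s a) hB
    calc |Jval γ r P W (H + 1) s τ - Jval γ r Q W (H + 1) s τ|
        ≤ γ * (Rmax * ∑ t ∈ Finset.range H, γ ^ t * (t : ℝ) * εm
            + γ ^ H * (H : ℝ) * εm * Vmax + εm * B) := by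
          rw [hsplit, abs_mul, abs_of_nonneg hγ0]
          gcongr
          exact (abs_add_le _ _).trans (add_le_add hinduct hmodel)
      _ = Rmax * ∑ t ∈ Finset.range (H + 1), γ ^ t * (t : ℝ) * εm
            + γ ^ (H + 1) * ((H + 1 : ℕ) : ℝ) * εm * Vmax := by
          simp only [← Finset.sum_mul, sum_range_succ_pow_mul_cast, B]
          push_cast
          ring

end Jval


theorem planner_suboptimality_transfer_bound_general
    {S A : Type*} [Fintype S]
    (P Phat : S → A → S → ℝ)
    (hP0 : ∀ s a s', 0 ≤ P s a s') (hP1 : ∀ s a, ∑ s', P s a s' = 1)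
    (hQ0 : ∀ s a s', 0 ≤ Phat s a s') (hQ1 : ∀ s a, ∑ s', Phat s a s' = 1)
    (γ : ℝ) (hγ0 : 0 ≤ γ)
    (r : S → A → ℝ) (Rmax : ℝ) (hr : ∀ s a, 0 ≤ r s a ∧ r s a ≤ Rmax)
    (εm : ℝ) (hTV : ∀ s a, (1 / 2) * ∑ s', |P s a s' - Phat s a s'| ≤ εm)
    (W : S → ℝ) (Vmax : ℝ) (hW : ∀ s, 0 ≤ W s ∧ W s ≤ Vmax)
    (H : ℕ)
    (εp : ℝ)
    (σstar σhat : S → (Fin H → A))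
    (hσhat : ∀ s τ, Jval γ r Phat W H s τ ≤ Jval γ r Phat W H s (σhat s) + εp) :
    ∀ s, Jval γ r P W H s (σstar s) - Jval γ r P W H s (σhat s)
      ≤ 2 * (Rmax * ∑ t ∈ Finset.range H, γ ^ t * (t : ℝ) * εm
              + γ ^ H * (H : ℝ) * εm * Vmax) + εp := by
  intro s
  have hsim := Jval.abs_sub_le hP0 hP1 hQ0 hQ1 hγ0 hr hW hTV H s
  have hstar := abs_le.mp (hsim (σstar s))
  have hhat := abs_le.mp (hsim (σhat s))
  linarith [hσhat s (σstar s)]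

/-- Reward `r ∈ [0, Rmax]`, approximate kernel `Phat` with
`TV(P(·|s,a), Phat(·|s,a)) ≤ εm`, terminal function `W ∈ [0, Vmax]`, `H ≥ 1`.
If `σstar s` maximizes `τ ↦ J_P(s,τ)` and `σhat s` is `εp`-suboptimal for
`τ ↦ J_{Phat}(s,τ)`, then for every state `s`,
`J_P(s, σstar s) - J_P(s, σhat s) ≤ 2 (Rmax ∑_{t<H} γ^t t εm + γ^H H εm Vmax) + εp`. -/
theorem planner_suboptimality_transfer_bound
    {S A : Type*} [Fintype S] [Fintype A] [Nonempty S] [Nonempty A]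
    (P Phat : S → A → S → ℝ)
    (hP0 : ∀ s a s', 0 ≤ P s a s') (hP1 : ∀ s a, ∑ s', P s a s' = 1)
    (hQ0 : ∀ s a s', 0 ≤ Phat s a s') (hQ1 : ∀ s a, ∑ s', Phat s a s' = 1)
    (γ : ℝ) (hγ0 : 0 ≤ γ) (hγ1 : γ < 1)
    (r : S → A → ℝ) (Rmax : ℝ) (hr : ∀ s a, 0 ≤ r s a ∧ r s a ≤ Rmax)
    (εm : ℝ) (hTV : ∀ s a, (1 / 2) * ∑ s', |P s a s' - Phat s a s'| ≤ εm)
    (W : S → ℝ) (Vmax : ℝ) (hW : ∀ s, 0 ≤ W s ∧ W s ≤ Vmax)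
    (H : ℕ) (hH : 1 ≤ H)
    (εp : ℝ) (hεp : 0 ≤ εp)
    (σstar σhat : S → (Fin H → A))
    (hσstar : ∀ s τ, Jval γ r P W H s τ ≤ Jval γ r P W H s (σstar s))
    (hσhat : ∀ s τ, Jval γ r Phat W H s τ ≤ Jval γ r Phat W H s (σhat s) + εp) :
    ∀ s, Jval γ r P W H s (σstar s) - Jval γ r P W H s (σhat s)
      ≤ 2 * (Rmax * ∑ t ∈ Finset.range H, γ ^ t * (t : ℝ) * εm
              + γ ^ H * (H : ℝ) * εm * Vmax) + εp :=
  planner_suboptimality_transfer_bound_general P Phat hP0 hP1 hQ0 hQ1 γ hγ0 r Rmax hr εm hTV W Vmax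
    hW H εp σstar σhat hσhat
end
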